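/- Let S be a commutative valuation ring (ideals totally ordered by inclusion, not necessarily a domain) and R a ring with a homomorphism f : S → R (not necessarily unital) whose image lies in the center of R. Then f satisfies strong going between: for primes P₁ ⊊ P₂ ⊊ P₃ of S and primes Q₁ ⊊ Q₃ of R with f⁻¹(Q₁) = P₁, f⁻¹(Q₃) = P₃, there exists a prime Q₂ of R with Q₁ ⊊ Q₂ ⊊ Q₃ and f⁻¹(Q₂) = P₂. -/

import Mathlib

/-- A (left) ideal of a possibly noncommutative ring is two-sided. -/
def IsTwoSidedI {R : Type*} [Ring R] (Q : Ideal R) : Prop :=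
  ∀ a ∈ Q, ∀ r : R, a * r ∈ Q

/-- Primeness for two-sided ideals of a possibly noncommutative ring. -/
def IsPrimeNC {R : Type*} [Ring R] (Q : Ideal R) : Prop :=
  Q ≠ ⊤ ∧ ∀ x y : R, (∀ r : R, x * r * y ∈ Q) → x ∈ Q ∨ y ∈ Q

/-- The preimage `f⁻¹(Q)` of an ideal along a (not necessarily unital) ring
homomorphism, as an ideal. -/
def preimageIdeal {S R : Type*} [Ring S] [Ring R] (f : S →ₙ+* R) (Q : Ideal R) :
    Ideal S where
  carrier := f ⁻¹' Q
  add_mem' ha hb := by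
    simp only [Set.mem_preimage, map_add] at *
    exact Q.add_mem ha hb
  zero_mem' := by simp only [Set.mem_preimage, map_zero]; exact Q.zero_mem
  smul_mem' c x hx := by
    simp only [Set.mem_preimage, smul_eq_mul, map_mul] at *
    exact Q.mul_mem_left _ hx

/-! McCoy's construction: take `Q₂` maximal among the two-sided ideals that contain
`Q₁ + R f(P₂)` and miss the m-system `(1 ∪ f(S ∖ P₂)) (R ∖ Q₃)`; such an ideal is prime, and
missing the m-system gives `Q₂ ⊆ Q₃` and `f⁻¹(Q₂) ⊆ P₂`. The valuation hypothesis is what lets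
`Q₁ + R f(P₂)` miss the m-system: every element of `R f(P₂)` is a single product `r f(p)`, and
if `f(s) c = q + r f(p)` with `s ∉ P₂`, then `p = s u` with `u ∈ P₂`, so `f(s) (c - r f(u)) ∈ Q₁`
and primeness of `Q₁` puts `c` in `Q₁ + R f(P₂) ⊆ Q₃`. -/

open scoped Pointwise

section TwoSided

variable {R : Type*} [Ring R]

def IsMSystem (M : Set R) : Prop :=
  ∀ a ∈ M, ∀ b ∈ M, ∃ r : R, a * r * b ∈ M

theorem IsTwoSidedI.sup {I J : Ideal R} (hI : IsTwoSidedI I) (hJ : IsTwoSidedI J) :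
    IsTwoSidedI (I ⊔ J) := by
  intro a ha r
  obtain ⟨x, hx, y, hy, rfl⟩ := Submodule.mem_sup.mp ha
  rw [add_mul]
  exact Submodule.add_mem_sup (hI x hx r) (hJ y hy r)

theorem isTwoSidedI_span_of_subset_center {s : Set R} (hs : s ⊆ Set.center R) :
    IsTwoSidedI (Ideal.span s) := by
  intro a ha
  induction ha using Submodule.span_induction with
  | mem x hx =>
    intro r
    rw [((Set.mem_center_iff.mp (hs hx)).comm r).eq]
    exact Ideal.mul_mem_left _ r (Ideal.subset_span hx)
  | zero => simp
  | add x y _ _ hx hy => intro r; rw [add_mul]; exact add_mem (hx r) (hy r)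
  | smul a x _ hx => intro r; rw [smul_eq_mul, mul_assoc]; exact Ideal.mul_mem_left _ a (hx r)

theorem IsPrimeNC.mem_or_mem_of_mul_mem_of_mem_center {Q : Ideal R} (hQ : IsPrimeNC Q)
    {z y : R} (hz : z ∈ Set.center R) (hzy : z * y ∈ Q) : z ∈ Q ∨ y ∈ Q :=
  hQ.2 z y fun r => by
    rw [((Set.mem_center_iff.mp hz).comm r).eq, mul_assoc]
    exact Q.mul_mem_left r hzy

def Ideal.leftColon (Q : Ideal R) (y : R) : Ideal R where
  carrier := {z | ∀ r, z * r * y ∈ Q}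
  zero_mem' r := by simp
  add_mem' hz hw r := by rw [add_mul, add_mul]; exact Q.add_mem (hz r) (hw r)
  smul_mem' a z hz r := by
    rw [smul_eq_mul, mul_assoc, mul_assoc]
    exact Q.mul_mem_left a (by rw [← mul_assoc]; exact hz r)

def Ideal.rightColon (Q : Ideal R) (x : R) : Ideal R where
  carrier := {z | ∀ r, x * r * z ∈ Q}
  zero_mem' r := by simp
  add_mem' hz hw r := by rw [mul_add]; exact Q.add_mem (hz r) (hw r)
  smul_mem' a z hz r := by rw [smul_eq_mul, ← mul_assoc, mul_assoc x]; exact hz (r * a)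

theorem Ideal.isTwoSidedI_leftColon (Q : Ideal R) (y : R) : IsTwoSidedI (Q.leftColon y) :=
  fun z hz b r => by rw [mul_assoc z]; exact hz (b * r)

theorem Ideal.isTwoSidedI_rightColon {Q : Ideal R} (hQ : IsTwoSidedI Q) (x : R) :
    IsTwoSidedI (Q.rightColon x) :=
  fun z hz b r => by rw [← mul_assoc]; exact hQ _ (hz r) b

theorem Ideal.le_leftColon {Q : Ideal R} (hQ : IsTwoSidedI Q) (y : R) : Q ≤ Q.leftColon y :=
  fun z hz r => by rw [mul_assoc]; exact hQ z hz (r * y)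

theorem Ideal.le_rightColon (Q : Ideal R) (x : R) : Q ≤ Q.rightColon x :=
  fun _ hz r => Q.mul_mem_left (x * r) hz

theorem exists_maximal_isTwoSidedI_disjoint {M : Set R} {A : Ideal R} (hA : IsTwoSidedI A)
    (hAM : Disjoint M A) :
    ∃ Q, A ≤ Q ∧ Maximal (fun I : Ideal R => IsTwoSidedI I ∧ Disjoint M I) Q := by
  refine zorn_le_nonempty₀ _ (fun c hc hchain I hI => ?_) A ⟨hA, hAM⟩
  have mem_sSup (z : R) : z ∈ sSup c ↔ ∃ J ∈ c, z ∈ J :=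
    Submodule.mem_sSup_of_directed ⟨I, hI⟩ hchain.directedOn
  refine ⟨sSup c, ⟨fun a ha r => ?_, Set.disjoint_right.mpr fun m hm => ?_⟩,
    fun J hJ => le_sSup hJ⟩
  · obtain ⟨J, hJ, haJ⟩ := (mem_sSup a).mp ha
    exact (mem_sSup _).mpr ⟨J, hJ, (hc hJ).1 a haJ r⟩
  · obtain ⟨J, hJ, hmJ⟩ := (mem_sSup m).mp hm
    exact Set.disjoint_right.mp (hc hJ).2 hmJ

/-- If `x R y ⊆ Q` with `x, y ∉ Q`, maximality makes `M` meet `Q.leftColon y` in some `m₁` and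
then `Q.rightColon m₁` in some `m₂`, so `m₁ R m₂ ⊆ Q`, against `M` being an m-system. -/
theorem Maximal.isPrimeNC {M : Set R} (hM : IsMSystem M) (hMne : M.Nonempty) {Q : Ideal R}
    (hQ : Maximal (fun I : Ideal R => IsTwoSidedI I ∧ Disjoint M I) Q) : IsPrimeNC Q := by
  obtain ⟨hQts, hQM⟩ := hQ.prop
  have meets {J : Ideal R} (hJ : IsTwoSidedI J) (hQJ : Q ≤ J) (hJQ : ¬J ≤ Q) :
      ∃ m ∈ M, m ∈ J :=
    Set.not_disjoint_iff.mp fun hMJ => hJQ (hQ.le_of_ge ⟨hJ, hMJ⟩ hQJ)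
  refine ⟨fun htop => ?_, fun x y hxy => ?_⟩
  · obtain ⟨m, hm⟩ := hMne
    exact Set.disjoint_left.mp hQM hm (htop ▸ Submodule.mem_top)
  by_contra! ⟨hx, hy⟩
  obtain ⟨m₁, hm₁, hm₁y⟩ := meets (Q.isTwoSidedI_leftColon y) (Q.le_leftColon hQts y)
    fun h => hx (h hxy)
  obtain ⟨m₂, hm₂, hm₁m₂⟩ := meets (Q.isTwoSidedI_rightColon hQts m₁) (Q.le_rightColon m₁)
    fun h => hy (h hm₁y)
  obtain ⟨r, hr⟩ := hM m₁ hm₁ m₂ hm₂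
  exact Set.disjoint_left.mp hQM hr (hm₁m₂ r)

theorem exists_isPrimeNC_le_disjoint {M : Set R} (hM : IsMSystem M) (hMne : M.Nonempty)
    {A : Ideal R} (hA : IsTwoSidedI A) (hAM : Disjoint M A) :
    ∃ Q : Ideal R, IsTwoSidedI Q ∧ IsPrimeNC Q ∧ A ≤ Q ∧ Disjoint M Q := by
  obtain ⟨Q, hAQ, hQ⟩ := exists_maximal_isTwoSidedI_disjoint hA hAM
  exact ⟨Q, hQ.prop.1, hQ.isPrimeNC hM hMne, hAQ, hQ.prop.2⟩

theorem isMSystem_mul_compl {E : Set R} (hE : E ⊆ Set.center R)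
    (hEmul : ∀ a ∈ E, ∀ b ∈ E, a * b ∈ E) {Q : Ideal R} (hQ : IsPrimeNC Q) :
    IsMSystem (E * (Q : Set R)ᶜ) := by
  rintro _ ⟨e₁, he₁, c₁, hc₁, rfl⟩ _ ⟨e₂, he₂, c₂, hc₂, rfl⟩
  obtain ⟨r, hr⟩ : ∃ r, c₁ * r * c₂ ∉ Q := by
    by_contra! h
    exact (hQ.2 c₁ c₂ h).elim hc₁ hc₂
  refine ⟨r, e₁ * e₂, hEmul e₁ he₁ e₂ he₂, c₁ * r * c₂, hr, ?_⟩
  have he₂c : e₂ * (c₁ * r) = c₁ * r * e₂ := ((Set.mem_center_iff.mp (hE he₂)).comm _).eq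
  calc e₁ * e₂ * (c₁ * r * c₂) = e₁ * (e₂ * (c₁ * r)) * c₂ := by noncomm_ring
    _ = e₁ * c₁ * r * (e₂ * c₂) := by rw [he₂c]; noncomm_ring

theorem disjoint_mul_compl {E : Set R} {A Q : Ideal R} (hAQ : A ≤ Q)
    (hE : ∀ e ∈ E, ∀ c, e * c ∈ A → c ∈ A) : Disjoint (E * (Q : Set R)ᶜ) A := by
  refine Set.disjoint_left.mpr ?_
  rintro _ ⟨e, he, c, hc, rfl⟩ hecA
  exact hc (hAQ (hE e he c hecA))

theorem le_of_disjoint_mul_compl {E : Set R} (hE : 1 ∈ E) {I Q : Ideal R}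
    (hIQ : Disjoint (E * (Q : Set R)ᶜ) I) : I ≤ Q := fun z hz => by
  by_contra hzQ
  exact Set.disjoint_left.mp hIQ ⟨1, hE, z, hzQ, one_mul z⟩ hz

end TwoSided

section Valuation

variable {S R : Type*} [CommRing S] [Ring R] (f : S →ₙ+* R)

theorem insert_one_image_compl_subset_center (hf : ∀ s, f s ∈ Set.center R) (P : Ideal S) :
    insert 1 (f '' (P : Set S)ᶜ) ⊆ Set.center R := by
  rintro _ (rfl | ⟨s, -, rfl⟩)
  exacts [Set.one_mem_center, hf s]

theorem mul_mem_insert_one_image_compl {P : Ideal S} (hP : P.IsPrime) :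
    ∀ a ∈ insert 1 (f '' (P : Set S)ᶜ), ∀ b ∈ insert 1 (f '' (P : Set S)ᶜ),
      a * b ∈ insert 1 (f '' (P : Set S)ᶜ) := by
  rintro _ (rfl | ⟨s, hs, rfl⟩) _ (rfl | ⟨t, ht, rfl⟩)
  · exact (one_mul (1 : R)).symm ▸ Set.mem_insert 1 _
  · exact Set.mem_insert_of_mem 1 ⟨t, ht, (one_mul (f t)).symm⟩
  · exact Set.mem_insert_of_mem 1 ⟨s, hs, (mul_one (f s)).symm⟩
  · exact Set.mem_insert_of_mem 1 ⟨s * t, fun hst => (hP.mem_or_mem hst).elim hs ht, map_mul f s t⟩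

variable [PreValuationRing S]

theorem exists_mul_of_mem_span_image {P : Ideal S} {x : R} (hx : x ∈ Ideal.span (f '' P)) :
    ∃ r : R, ∃ p ∈ P, x = r * f p := by
  induction hx using Submodule.span_induction with
  | mem x hx =>
    obtain ⟨p, hp, rfl⟩ := hx
    exact ⟨1, p, hp, (one_mul _).symm⟩
  | zero => exact ⟨0, 0, P.zero_mem, (zero_mul _).symm⟩
  | add x y _ _ hx hy =>
    obtain ⟨r, p, hp, rfl⟩ := hx
    obtain ⟨r', p', hp', rfl⟩ := hy
    rcases ValuationRing.dvd_total p p' with ⟨u, rfl⟩ | ⟨u, rfl⟩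
    · exact ⟨r + r' * f u, p, hp, by rw [mul_comm, map_mul, add_mul, mul_assoc]⟩
    · exact ⟨r * f u + r', p', hp', by rw [mul_comm, map_mul, add_mul, mul_assoc]⟩
  | smul a x _ hx =>
    obtain ⟨r, p, hp, rfl⟩ := hx
    exact ⟨a * r, p, hp, (mul_assoc _ _ _).symm⟩

theorem mem_sup_span_image_of_mul_mem {P : Ideal S} (hP : P.IsPrime) {Q : Ideal R}
    (hQ : IsPrimeNC Q) (hQP : preimageIdeal f Q ≤ P) {s : S} (hs : s ∉ P)
    (hfs : f s ∈ Set.center R) {c : R} (hc : f s * c ∈ Q ⊔ Ideal.span (f '' P)) :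
    c ∈ Q ⊔ Ideal.span (f '' P) := by
  obtain ⟨q, hq, y, hy, hsum⟩ := Submodule.mem_sup.mp hc
  obtain ⟨r, p, hp, rfl⟩ := exists_mul_of_mem_span_image f hy
  obtain ⟨u, rfl⟩ : s ∣ p := (ValuationRing.dvd_total s p).resolve_right
    fun ⟨u, hu⟩ => hs (hu ▸ P.mul_mem_right u hp)
  have hu : u ∈ P := (hP.mem_or_mem hp).resolve_left hs
  have hsq : f s * (c - r * f u) = q := by
    rw [mul_sub, ← hsum, map_mul, ← mul_assoc (f s), ((Set.mem_center_iff.mp hfs).comm r).eq,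
      mul_assoc r, add_sub_cancel_right]
  rcases hQ.mem_or_mem_of_mul_mem_of_mem_center hfs (hsq ▸ hq) with h | h
  · exact absurd (hQP h) hs
  · rw [← sub_add_cancel c (r * f u)]
    exact Submodule.add_mem_sup h (Ideal.mul_mem_left _ r (Ideal.subset_span ⟨u, hu, rfl⟩))

theorem disjoint_insert_one_image_compl_mul_compl_sup_span_image {P : Ideal S}
    (hP : P.IsPrime) (hf : ∀ s, f s ∈ Set.center R) {Q₁ Q₃ : Ideal R} (hQ₁ : IsPrimeNC Q₁)
    (hQ₁₃ : Q₁ ≤ Q₃) (h₁ : preimageIdeal f Q₁ ≤ P) (h₃ : P ≤ preimageIdeal f Q₃) :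
    Disjoint (insert 1 (f '' (P : Set S)ᶜ) * (Q₃ : Set R)ᶜ)
      (Q₁ ⊔ Ideal.span (f '' P) : Ideal R) := by
  refine disjoint_mul_compl (sup_le hQ₁₃ (Ideal.span_le.mpr (Set.image_subset_iff.mpr h₃))) ?_
  rintro _ (rfl | ⟨s, hs, rfl⟩) c hc
  · rwa [one_mul] at hc
  · exact mem_sup_span_image_of_mul_mem f hP hQ₁ h₁ hs (hf s) hc

end Valuation

theorem stmt12_general {S R : Type*} [CommRing S] [Ring R]
    (hval : ∀ I J : Ideal S, I ≤ J ∨ J ≤ I)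
    (f : S →ₙ+* R) (hcentral : ∀ s : S, f s ∈ Set.center R)
    (P₁ P₂ P₃ : Ideal S) (hP₂ : P₂.IsPrime)
    (h12 : P₁ < P₂) (h23 : P₂ < P₃)
    (Q₁ Q₃ : Ideal R) (hQ₁ts : IsTwoSidedI Q₁) (hQ₁ : IsPrimeNC Q₁)
    (hQ₃ : IsPrimeNC Q₃) (hQ : Q₁ < Q₃)
    (hover₁ : preimageIdeal f Q₁ = P₁) (hover₃ : preimageIdeal f Q₃ = P₃) :
    ∃ Q₂ : Ideal R, IsTwoSidedI Q₂ ∧ IsPrimeNC Q₂ ∧ Q₁ < Q₂ ∧ Q₂ < Q₃ ∧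
      preimageIdeal f Q₂ = P₂ := by
  have : PreValuationRing S := PreValuationRing.iff_ideal_total.mpr ⟨hval⟩
  have h1Q₃ : (1 : R) ∉ Q₃ := (Ideal.ne_top_iff_one Q₃).mp hQ₃.1
  obtain ⟨Q₂, hQ₂ts, hQ₂, hAQ₂, hQ₂M⟩ := exists_isPrimeNC_le_disjoint
    (isMSystem_mul_compl (insert_one_image_compl_subset_center f hcentral P₂)
      (mul_mem_insert_one_image_compl f hP₂) hQ₃)
    ⟨1, 1, Set.mem_insert 1 _, 1, h1Q₃, one_mul 1⟩
    (hQ₁ts.sup (isTwoSidedI_span_of_subset_center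
      (Set.image_subset_iff.mpr fun s _ => hcentral s)))
    (disjoint_insert_one_image_compl_mul_compl_sup_span_image f hP₂ hcentral hQ₁ hQ.le
      (hover₁ ▸ h12.le) (hover₃ ▸ h23.le))
  have hover₂ : preimageIdeal f Q₂ = P₂ := by
    refine le_antisymm (fun s hs => ?_) fun p hp => hAQ₂ (Submodule.mem_sup_right
      (Ideal.subset_span ⟨p, hp, rfl⟩))
    by_contra hs₂
    exact Set.disjoint_left.mp hQ₂M ⟨f s, Set.mem_insert_of_mem 1 ⟨s, hs₂, rfl⟩, 1, h1Q₃,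
      mul_one (f s)⟩ hs
  refine ⟨Q₂, hQ₂ts, hQ₂, lt_of_le_of_ne (le_sup_left.trans hAQ₂) ?_,
    lt_of_le_of_ne (le_of_disjoint_mul_compl (Set.mem_insert 1 _) hQ₂M) ?_, hover₂⟩
  · rintro rfl
    exact h12.ne (hover₁ ▸ hover₂)
  · rintro rfl
    exact h23.ne (hover₂ ▸ hover₃)

/-- **SGB.** Let `S` be a commutative valuation ring (ideals totally
ordered by inclusion, not necessarily a domain), `R` a ring as above, and
`f : S → R` a (not necessarily unital) homomorphism with central image.  Then `f`
satisfies strong going between. -/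
theorem stmt12 {S R : Type*} [CommRing S] [Ring R]
    (hval : ∀ I J : Ideal S, I ≤ J ∨ J ≤ I)
    (f : S →ₙ+* R) (hcentral : ∀ s : S, f s ∈ Set.center R)
    (P₁ P₂ P₃ : Ideal S) (hP₁ : P₁.IsPrime) (hP₂ : P₂.IsPrime) (hP₃ : P₃.IsPrime)
    (h12 : P₁ < P₂) (h23 : P₂ < P₃)
    (Q₁ Q₃ : Ideal R) (hQ₁ts : IsTwoSidedI Q₁) (hQ₁ : IsPrimeNC Q₁)
    (hQ₃ts : IsTwoSidedI Q₃) (hQ₃ : IsPrimeNC Q₃) (hQ : Q₁ < Q₃)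
    (hover₁ : preimageIdeal f Q₁ = P₁) (hover₃ : preimageIdeal f Q₃ = P₃) :
    ∃ Q₂ : Ideal R, IsTwoSidedI Q₂ ∧ IsPrimeNC Q₂ ∧ Q₁ < Q₂ ∧ Q₂ < Q₃ ∧
      preimageIdeal f Q₂ = P₂ :=
  stmt12_general hval f hcentral P₁ P₂ P₃ hP₂ h12 h23 Q₁ Q₃ hQ₁ts hQ₁ hQ₃ hQ hover₁ hover₃
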